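/- arXiv:1203.0950 — 2 statements merged into one kernel-verified Lean document; each statement's English description precedes it below -/
import Mathlib

section
/- Let g₁ : A → B and g₂ : B → C be continuous maps. The map sending a pair (β, γ), where β is a path in B from g₁(a) to some b and γ is a path in C from g₂(b) to c, to the concatenation (g₂ ∘ β) · γ, and the map sending a path δ from g₂(g₁(a)) to c to the pair (c_{g₁(a)}, δ), are inverse fiberwise homotopy equivalences over A × C between the composite of base change objects ({}_{g₁}B) ×_B ({}_{g₂}C) and {}_{g₂ g₁}C. -/
universe u

variable {A B Z : Type u} [TopologicalSpace A] [TopologicalSpace B] [TopologicalSpace Z]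

/-- The base change object `{}_g B → A × B`: pairs `(a, β)` with `β` a path in `B`
starting at `g a`, fibered over `A × B` by `(a, β 1)`. -/
abbrev BCOl {A B : Type u} [TopologicalSpace A] [TopologicalSpace B] (g : A → B) : Type u :=
  {x : A × C(unitInterval, B) // x.2 0 = g x.1}

/-- A free path, as a `Path` between its endpoints. -/
def toPath {B : Type u} [TopologicalSpace B] (f : C(unitInterval, B)) : Path (f 0) (f 1) :=
  ⟨f, rfl, rfl⟩

/-- The composite `({}_{g₁}B) ×_B ({}_{g₂}Z)` over the middle copy of `B`. -/
abbrev BCOcomp (g₁ : A → B) (g₂ : B → Z) : Type u :=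
  {w : BCOl g₁ × BCOl g₂ // w.2.1.1 = w.1.1.2 1}

/-- The map `({}_{g₁}B) ×_B ({}_{g₂}Z) → {}_{g₂g₁}Z` sending `(β, γ)` to `(g₂ ∘ β) · γ`. -/
noncomputable def bcoFwd (g₁ : A → B) (g₂ : B → Z) (hg₂ : Continuous g₂)
    (w : BCOcomp g₁ g₂) : BCOl (g₂ ∘ g₁) :=
  ⟨(w.1.1.1.1,
      (((toPath w.1.1.1.2).map hg₂).trans
        ((toPath w.1.2.1.2).cast ((w.1.2.2.trans (congrArg g₂ w.2)).symm) rfl)).toContinuousMap),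
    ((((toPath w.1.1.1.2).map hg₂).trans _).source).trans (congrArg g₂ w.1.1.2)⟩

/-- The map `{}_{g₂g₁}Z → ({}_{g₁}B) ×_B ({}_{g₂}Z)` sending `δ` to `(c_{g₁ a}, δ)`. -/
def bcoBwd (g₁ : A → B) (g₂ : B → Z) (x : BCOl (g₂ ∘ g₁)) : BCOcomp g₁ g₂ :=
  ⟨(⟨(x.1.1, ContinuousMap.const unitInterval (g₁ x.1.1)), rfl⟩,
    ⟨(g₁ x.1.1, x.1.2), x.2⟩), rfl⟩

/-!
At time `t` the homotopy on `({}_{g₁}B) ×_B ({}_{g₂}Z)` shrinks the first path `β` to `β|[0, t]`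
and replaces the second path `γ` by `(g₂ ∘ β|[t, 1]) · γ`: at `t = 0` this is
`(c_{g₁ a}, (g₂ ∘ β) · γ)`, at `t = 1` it is `(β, γ)`. On the image of `δ ↦ (c_{g₁ a}, δ)` the first
path stays constant, so the second component alone is a homotopy on `{}_{g₂g₁}Z` from
`δ ↦ c · δ` to the identity. Both homotopies keep the endpoints in `A × Z` fixed.
-/

open Set unitInterval

namespace ContinuousMap

variable {X : Type*} [TopologicalSpace X]

/-- `p|[t, 1]` followed by `q`, with the junction at `(1 - t) / 2`: for `t = 0` this is `p · q`,
for `t = 1` it is `q` itself rather than a reparametrization of it. -/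
noncomputable def slideTrans (p q : C(I, X)) (t s : I) : X :=
  if (s : ℝ) ≤ (1 - t) / 2 then p (projIcc 0 1 zero_le_one (t + 2 * s))
  else q (projIcc 0 1 zero_le_one ((2 * s - 1 + t) / (1 + t)))

theorem slideTrans_zero_right (p q : C(I, X)) (t : I) : p.slideTrans q t 0 = p t := by
  have ht : (0 : ℝ) ≤ (1 - t) / 2 := by linarith [t.2.2]
  simp [slideTrans, ht]

theorem slideTrans_one_right (p q : C(I, X)) (t : I) : p.slideTrans q t 1 = q 1 := by
  have ht : ¬ ((1 : I) : ℝ) ≤ (1 - t) / 2 := by rw [Icc.coe_one]; linarith [t.2.1]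
  have h1 : (2 * ((1 : I) : ℝ) - 1 + t) / (1 + t) = 1 := by
    rw [Icc.coe_one, div_eq_one_iff_eq (by linarith [t.2.1])]; ring
  rw [slideTrans, if_neg ht, h1, projIcc_right]
  rfl

theorem slideTrans_one_left {p q : C(I, X)} (hpq : p 1 = q 0) (s : I) :
    p.slideTrans q 1 s = q s := by
  by_cases hs : (s : ℝ) ≤ 0
  · have hs0 : s = 0 := le_antisymm hs s.2.1
    simp [slideTrans, hs0, hpq]
  · have hs' : ¬ (s : ℝ) ≤ (1 - ((1 : I) : ℝ)) / 2 := by simpa using hs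
    have h1 : (2 * (s : ℝ) - 1 + ((1 : I) : ℝ)) / (1 + ((1 : I) : ℝ)) = s := by
      rw [Icc.coe_one]; ring
    rw [slideTrans, if_neg hs', h1, projIcc_val]

theorem slideTrans_zero_left {x y z : X} (γ : Path x y) (γ' : Path y z) (s : I) :
    slideTrans γ γ' 0 s = γ.trans γ' s := by
  rw [slideTrans, Path.trans_apply]
  by_cases hs : (s : ℝ) ≤ 1 / 2
  · have hs' : (s : ℝ) ≤ (1 - ((0 : I) : ℝ)) / 2 := by simpa using hs
    have h2s : ((0 : I) : ℝ) + 2 * s = 2 * s := by simp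
    rw [if_pos hs', dif_pos hs, h2s, projIcc_of_mem _ ⟨by linarith [s.2.1], by linarith⟩]
    rfl
  · have hs' : ¬ (s : ℝ) ≤ (1 - ((0 : I) : ℝ)) / 2 := by simpa using hs
    have h2s : (2 * (s : ℝ) - 1 + ((0 : I) : ℝ)) / (1 + ((0 : I) : ℝ)) = 2 * s - 1 := by simp
    rw [if_neg hs', dif_neg hs, h2s, projIcc_of_mem _ ⟨by linarith, by linarith [s.2.2]⟩]
    rfl

theorem _root_.Continuous.slideTrans {Y : Type*} [TopologicalSpace Y] {p q : Y → C(I, X)}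
    {t s : Y → I} (hp : Continuous p) (hq : Continuous q) (ht : Continuous t)
    (hs : Continuous s) (hpq : ∀ y, p y 1 = q y 0) :
    Continuous fun y => (p y).slideTrans (q y) (t y) (s y) := by
  have h1t : ∀ y, (1 : ℝ) + t y ≠ 0 := fun y => by linarith [(t y).2.1]
  refine Continuous.if_le ?_ ?_ (by fun_prop) (by fun_prop) fun y hy => ?_
  · exact hp.eval (continuous_projIcc.comp (by fun_prop))
  · exact hq.eval (continuous_projIcc.comp ((by fun_prop : Continuous _).div (by fun_prop) h1t))
  · have h1 : (t y : ℝ) + 2 * s y = 1 := by rw [hy]; ring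
    have h0 : (2 * (s y : ℝ) - 1 + t y) / (1 + t y) = 0 := by rw [hy]; ring_nf
    simp [h1, h0, hpq]

end ContinuousMap

theorem BCOcomp.ext {g₁ : A → B} {g₂ : B → Z} {u v : BCOcomp g₁ g₂}
    (h₁ : u.1.1.1 = v.1.1.1) (h₂ : u.1.2.1 = v.1.2.1) : u = v :=
  Subtype.ext (Prod.ext (Subtype.ext h₁) (Subtype.ext h₂))

theorem continuous_bcoBwd {g₁ : A → B} (hg₁ : Continuous g₁) (g₂ : B → Z) :
    Continuous (bcoBwd g₁ g₂) := by
  unfold bcoBwd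
  fun_prop

noncomputable def bcoCompHomotopy (g₁ : A → B) (g₂ : B → Z) (hg₂ : Continuous g₂)
    (p : BCOcomp g₁ g₂ × I) : BCOcomp g₁ g₂ :=
  ⟨(⟨(p.1.1.1.1.1, p.1.1.1.1.2.comp ⟨(p.2 * ·), by fun_prop⟩), by simpa using p.1.1.1.2⟩,
    ⟨(p.1.1.1.1.2 p.2, ⟨(ContinuousMap.comp ⟨g₂, hg₂⟩ p.1.1.1.1.2).slideTrans p.1.1.2.1.2 p.2,
        continuous_const.slideTrans continuous_const continuous_const continuous_id
          fun _ => by simp [p.1.1.2.2, p.1.2]⟩),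
      ContinuousMap.slideTrans_zero_right _ _ _⟩), by simp⟩

theorem continuous_bcoCompHomotopy (g₁ : A → B) {g₂ : B → Z} (hg₂ : Continuous g₂) :
    Continuous (bcoCompHomotopy g₁ g₂ hg₂) := by
  have hslide : Continuous fun q : (BCOcomp g₁ g₂ × I) × I =>
      (ContinuousMap.comp ⟨g₂, hg₂⟩ q.1.1.1.1.1.2).slideTrans q.1.1.1.2.1.2 q.1.2 q.2 :=
    Continuous.slideTrans (by fun_prop) (by fun_prop) (by fun_prop) (by fun_prop)
      fun q => by simp [q.1.1.1.2.2, q.1.1.2]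
  refine .subtype_mk (.prodMk (.subtype_mk (.prodMk (by fun_prop) ?_) _)
    (.subtype_mk (.prodMk (by fun_prop) ?_) _)) _
  · exact ContinuousMap.continuous_of_continuous_uncurry _
      (by fun_prop : Continuous fun q : (BCOcomp g₁ g₂ × I) × I => q.1.1.1.1.1.2 (q.1.2 * q.2))
  · exact ContinuousMap.continuous_of_continuous_uncurry _ hslide

theorem bcoCompHomotopy_zero (g₁ : A → B) {g₂ : B → Z} (hg₂ : Continuous g₂)
    (w : BCOcomp g₁ g₂) :
    bcoCompHomotopy g₁ g₂ hg₂ (w, 0) = bcoBwd g₁ g₂ (bcoFwd g₁ g₂ hg₂ w) := by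
  apply BCOcomp.ext <;> refine Prod.ext ?_ ?_
  · rfl
  · ext s
    simp [bcoCompHomotopy, bcoBwd, bcoFwd, w.1.1.2]
  · simp [bcoCompHomotopy, bcoBwd, bcoFwd, w.1.1.2]
  · ext s
    exact ContinuousMap.slideTrans_zero_left ((toPath w.1.1.1.2).map hg₂)
      ((toPath w.1.2.1.2).cast (w.1.2.2.trans (congrArg g₂ w.2)).symm rfl) s

theorem bcoCompHomotopy_one (g₁ : A → B) {g₂ : B → Z} (hg₂ : Continuous g₂)
    (w : BCOcomp g₁ g₂) : bcoCompHomotopy g₁ g₂ hg₂ (w, 1) = w := by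
  apply BCOcomp.ext <;> refine Prod.ext ?_ ?_
  · rfl
  · ext s
    simp [bcoCompHomotopy]
  · simp [bcoCompHomotopy, w.2]
  · ext s
    exact ContinuousMap.slideTrans_one_left (by simp [w.1.2.2, w.2]) s

theorem bcoCompHomotopy_fiber (g₁ : A → B) {g₂ : B → Z} (hg₂ : Continuous g₂)
    (w : BCOcomp g₁ g₂) (t : I) :
    ((bcoCompHomotopy g₁ g₂ hg₂ (w, t)).1.1.1.1, (bcoCompHomotopy g₁ g₂ hg₂ (w, t)).1.2.1.2 1) =
      (w.1.1.1.1, w.1.2.1.2 1) :=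
  Prod.ext rfl (ContinuousMap.slideTrans_one_right _ _ t)

noncomputable def bcoHomotopy (g₁ : A → B) (g₂ : B → Z) (hg₂ : Continuous g₂)
    (p : BCOl (g₂ ∘ g₁) × I) : BCOl (g₂ ∘ g₁) :=
  ⟨(p.1.1.1, (bcoCompHomotopy g₁ g₂ hg₂ (bcoBwd g₁ g₂ p.1, p.2)).1.2.1.2),
    (bcoCompHomotopy g₁ g₂ hg₂ (bcoBwd g₁ g₂ p.1, p.2)).1.2.2⟩

theorem continuous_bcoHomotopy {g₁ : A → B} (hg₁ : Continuous g₁) {g₂ : B → Z}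
    (hg₂ : Continuous g₂) : Continuous (bcoHomotopy g₁ g₂ hg₂) := by
  have hH : Continuous fun p : BCOl (g₂ ∘ g₁) × I =>
      bcoCompHomotopy g₁ g₂ hg₂ (bcoBwd g₁ g₂ p.1, p.2) :=
    (continuous_bcoCompHomotopy g₁ hg₂).comp
      (((continuous_bcoBwd hg₁ g₂).comp continuous_fst).prodMk continuous_snd)
  have hpath : Continuous fun w : BCOcomp g₁ g₂ => w.1.2.1.2 := by fun_prop
  exact .subtype_mk (.prodMk (by fun_prop) (hpath.comp hH)) _

theorem bcoHomotopy_zero (g₁ : A → B) {g₂ : B → Z} (hg₂ : Continuous g₂) (x : BCOl (g₂ ∘ g₁)) :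
    bcoHomotopy g₁ g₂ hg₂ (x, 0) = bcoFwd g₁ g₂ hg₂ (bcoBwd g₁ g₂ x) :=
  Subtype.ext (Prod.ext rfl (congrArg (·.1.2.1.2) (bcoCompHomotopy_zero g₁ hg₂ (bcoBwd g₁ g₂ x))))

theorem bcoHomotopy_one (g₁ : A → B) {g₂ : B → Z} (hg₂ : Continuous g₂) (x : BCOl (g₂ ∘ g₁)) :
    bcoHomotopy g₁ g₂ hg₂ (x, 1) = x :=
  Subtype.ext (Prod.ext rfl (congrArg (·.1.2.1.2) (bcoCompHomotopy_one g₁ hg₂ (bcoBwd g₁ g₂ x))))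

theorem bcoHomotopy_fiber (g₁ : A → B) {g₂ : B → Z} (hg₂ : Continuous g₂) (x : BCOl (g₂ ∘ g₁))
    (t : I) : ((bcoHomotopy g₁ g₂ hg₂ (x, t)).1.1, (bcoHomotopy g₁ g₂ hg₂ (x, t)).1.2 1) =
      (x.1.1, x.1.2 1) :=
  Prod.ext rfl (congrArg Prod.snd (bcoCompHomotopy_fiber g₁ hg₂ (bcoBwd g₁ g₂ x) t))

theorem continuous_bcoFwd (g₁ : A → B) {g₂ : B → Z} (hg₂ : Continuous g₂) :
    Continuous (bcoFwd g₁ g₂ hg₂) := by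
  have h : (fun w => (bcoFwd g₁ g₂ hg₂ w).1) =
      fun w => (w.1.1.1.1, (bcoCompHomotopy g₁ g₂ hg₂ (w, 0)).1.2.1.2) := by
    funext w
    rw [bcoCompHomotopy_zero]
    rfl
  have hpath : Continuous fun w : BCOcomp g₁ g₂ => w.1.2.1.2 := by fun_prop
  refine continuous_induced_rng.2 ?_
  rw [Function.comp_def, h]
  exact .prodMk (by fun_prop) (hpath.comp
    ((continuous_bcoCompHomotopy g₁ hg₂).comp (continuous_id.prodMk continuous_const)))

/-- Pseudofunctoriality of base change objects: the maps `(β, γ) ↦ (g₂ ∘ β) · γ` and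
`δ ↦ (c_{g₁ a}, δ)` are inverse fiberwise homotopy equivalences over `A × Z` between
`({}_{g₁}B) ×_B ({}_{g₂}Z)` and `{}_{g₂g₁}Z`. -/
theorem base_change_pseudofunctorial (g₁ : A → B) (g₂ : B → Z)
    (hg₁ : Continuous g₁) (hg₂ : Continuous g₂) :
    Continuous (bcoFwd g₁ g₂ hg₂) ∧ Continuous (bcoBwd g₁ g₂) ∧
    (∀ w : BCOcomp g₁ g₂,
      ((bcoFwd g₁ g₂ hg₂ w).1.1, (bcoFwd g₁ g₂ hg₂ w).1.2 1) = (w.1.1.1.1, w.1.2.1.2 1)) ∧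
    (∀ x : BCOl (g₂ ∘ g₁),
      ((bcoBwd g₁ g₂ x).1.1.1.1, (bcoBwd g₁ g₂ x).1.2.1.2 1) = (x.1.1, x.1.2 1)) ∧
    (∃ H : BCOcomp g₁ g₂ × unitInterval → BCOcomp g₁ g₂, Continuous H ∧
      (∀ w, H (w, 0) = bcoBwd g₁ g₂ (bcoFwd g₁ g₂ hg₂ w)) ∧ (∀ w, H (w, 1) = w) ∧
      ∀ w t, ((H (w, t)).1.1.1.1, (H (w, t)).1.2.1.2 1) = (w.1.1.1.1, w.1.2.1.2 1)) ∧
    (∃ K : BCOl (g₂ ∘ g₁) × unitInterval → BCOl (g₂ ∘ g₁), Continuous K ∧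
      (∀ x, K (x, 0) = bcoFwd g₁ g₂ hg₂ (bcoBwd g₁ g₂ x)) ∧ (∀ x, K (x, 1) = x) ∧
      ∀ x t, ((K (x, t)).1.1, (K (x, t)).1.2 1) = (x.1.1, x.1.2 1)) :=
  ⟨continuous_bcoFwd g₁ hg₂, continuous_bcoBwd hg₁ g₂,
    fun _ => Prod.ext rfl (Path.target _),
    fun _ => rfl,
    ⟨_, continuous_bcoCompHomotopy g₁ hg₂, bcoCompHomotopy_zero g₁ hg₂,
      bcoCompHomotopy_one g₁ hg₂, bcoCompHomotopy_fiber g₁ hg₂⟩,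
    ⟨_, continuous_bcoHomotopy hg₁ hg₂, bcoHomotopy_zero g₁ hg₂, bcoHomotopy_one g₁ hg₂,
      bcoHomotopy_fiber g₁ hg₂⟩⟩
end

section
/- Let g : B → B be continuous and let Λ^g B denote the twisted free loop space, i.e. the space of pairs (b, γ) with γ a path from b to g(b), topologized as a subspace of B × C([0,1], B). Then π₀(Λ^g B) is in natural bijection with the set of Reidemeister classes: pairs (b, γ : b ⇝ g(b)) modulo (b,γ) ∼ (b',γ') iff there is a path α : b ⇝ b' with α · γ' path-homotopic to γ · (g ∘ α) rel endpoints. -/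
/-!
A path in `Λ^g B` from `(b, γ)` to `(b', γ')` is a map of the square `I × I → B` with
sides `γ` and `γ'` and with bottom and top edges `α` and `g ∘ α`, where `α` is the path traced
by the base point; since the square is contractible, `α · γ' ≃ γ · (g ∘ α)`. Conversely, given
such an `α`, sliding the base point along `α` through the loops `(α|[0,t])⁻¹ · γ · g(α|[0,t])`
joins `(b, γ)` to `(b', α⁻¹ · γ · g(α))`, and this loop is path-homotopic to `γ'`; a path
homotopy is itself a path in `Λ^g B`. Thus `π₀(Λ^g B)` and the Reidemeister classes are
quotients of the same set by the same relation.
-/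

open scoped unitInterval

section PathHomotopy

variable {X : Type*} [TopologicalSpace X]

theorem Path.Homotopic.symm_trans_of_trans {a b c : X} {α : Path a b} {γ : Path b c}
    {δ : Path a c} (h : (α.trans γ).Homotopic δ) : γ.Homotopic (α.symm.trans δ) :=
  calc Path.Homotopic γ ((Path.refl b).trans γ) := ⟨(Path.Homotopy.reflTrans γ).symm⟩
    Path.Homotopic _ ((α.symm.trans α).trans γ) :=
      ⟨Path.Homotopy.hcomp (Path.Homotopy.reflSymmTrans α) (.refl γ)⟩
    Path.Homotopic _ (α.symm.trans (α.trans γ)) := ⟨Path.Homotopy.transAssoc _ _ _⟩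
    Path.Homotopic _ (α.symm.trans δ) := (Path.Homotopic.refl _).hcomp h

theorem Path.homotopic_trans_of_square (f : C(I × I, X)) {a b c d : X} {p : Path a b}
    {q : Path b c} {r : Path a d} {s : Path d c} (hp : ∀ t, p t = f (t, 0))
    (hq : ∀ t, q t = f (1, t)) (hr : ∀ t, r t = f (0, t)) (hs : ∀ t, s t = f (t, 1)) :
    (p.trans q).Homotopic (r.trans s) := by
  obtain rfl : a = f (0, 0) := by rw [← p.source, hp]
  obtain rfl : b = f (1, 0) := by rw [← p.target, hp]
  obtain rfl : c = f (1, 1) := by rw [← q.target, hq]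
  obtain rfl : d = f (0, 1) := by rw [← r.target, hr]
  obtain rfl : p = (unitInterval.path01.prod (Path.refl 0)).map f.continuous :=
    Path.ext (funext hp)
  obtain rfl : q = ((Path.refl 1).prod unitInterval.path01).map f.continuous :=
    Path.ext (funext hq)
  obtain rfl : r = ((Path.refl 0).prod unitInterval.path01).map f.continuous :=
    Path.ext (funext hr)
  obtain rfl : s = (unitInterval.path01.prod (Path.refl 1)).map f.continuous :=
    Path.ext (funext hs)
  rw [← Path.map_trans, ← Path.map_trans, Path.trans_prod_eq_prod_trans,
    Path.trans_prod_eq_prod_trans]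
  have H : (unitInterval.path01.trans (Path.refl 1)).Homotopy
      ((Path.refl 0).trans unitInterval.path01) :=
    (Path.Homotopy.transRefl _).trans (Path.Homotopy.reflTrans _).symm
  exact ⟨(Path.Homotopic.prodHomotopy H H.symm).map f⟩

end PathHomotopy

section

variable {B : Type*} [TopologicalSpace B] {g : B → B}

abbrev TwistedLoopSpace (g : B → B) : Type _ :=
  {x : B × C(I, B) // x.2 0 = x.1 ∧ x.2 1 = g x.1}

def ReidemeisterRel (hg : Continuous g) (u v : Σ b : B, Path b (g b)) : Prop :=
  ∃ α : Path u.1 v.1, (α.trans v.2).Homotopic (u.2.trans (α.map hg))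

namespace TwistedLoopSpace

def mk (b : B) (γ : Path b (g b)) : TwistedLoopSpace g :=
  ⟨(b, γ.toContinuousMap), γ.source, γ.target⟩

def path (x : TwistedLoopSpace g) : Path x.1.1 (g x.1.1) := ⟨x.1.2, x.2.1, x.2.2⟩

def equivSigma : TwistedLoopSpace g ≃ Σ b : B, Path b (g b) where
  toFun x := ⟨x.1.1, x.path⟩
  invFun u := mk u.1 u.2
  left_inv _ := rfl
  right_inv _ := rfl

theorem mk_eq_mk {b b' : B} {γ : Path b (g b)} {γ' : Path b' (g b')} (h : ⇑γ = ⇑γ') :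
    mk b γ = mk b' γ' := by
  have hb : b = b' := by rw [← γ.source, ← γ'.source, h]
  exact Subtype.ext (Prod.ext hb (ContinuousMap.ext (congrFun h)))

theorem joined_mk_of_continuous_family {a : I → B} (δ : ∀ t, Path (a t) (g (a t)))
    (hδ : Continuous ↿δ) : Joined (mk (a 0) (δ 0)) (mk (a 1) (δ 1)) := by
  have ha : Continuous a :=
    (hδ.comp (continuous_id.prodMk continuous_const)).congr fun t => (δ t).source
  have hδ' : Continuous fun t => (δ t).toContinuousMap :=
    ContinuousMap.continuous_of_continuous_uncurry _ hδ
  exact ⟨⟨⟨fun t => mk (a t) (δ t), (ha.prodMk hδ').subtype_mk _⟩, rfl, rfl⟩⟩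

theorem joined_mk_of_homotopic {b : B} {γ γ' : Path b (g b)} (h : γ.Homotopic γ') :
    Joined (mk b γ) (mk b γ') := by
  obtain ⟨H⟩ := h
  simpa only [H.eval_zero, H.eval_one] using
    joined_mk_of_continuous_family (a := fun _ => b) H.eval H.continuous

theorem joined_mk_conj (hg : Continuous g) {b b' : B} (α : Path b b') (γ : Path b (g b)) :
    Joined (mk b γ) (mk b' (α.symm.trans (γ.trans (α.map hg)))) := by
  set A : ∀ t, Path b (α t) := fun t => (α.subpath 0 t).cast α.source.symm rfl
  have hA : Continuous ↿A :=
    α.subpath_continuous_family.comp (continuous_const.prodMk continuous_id)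
  set δ : ∀ t, Path (α t) (g (α t)) := fun t => (A t).symm.trans (γ.trans ((A t).map hg))
  have hδ : Continuous ↿δ :=
    Path.trans_continuous_family _ (Path.symm_continuous_family _ hA) _
      (Path.trans_continuous_family _ (γ.continuous.comp continuous_snd) _ (hg.comp hA))
  have h₀ : mk (α 0) (δ 0) = mk b ((Path.refl b).trans (γ.trans (Path.refl (g b)))) :=
    mk_eq_mk (by ext s; simp [δ, A, Path.trans_apply, Path.subpath_self])
  have h₁ : mk (α 1) (δ 1) = mk b' (α.symm.trans (γ.trans (α.map hg))) :=
    mk_eq_mk (by ext s; simp [δ, A, Path.trans_apply, Path.subpath_zero_one])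
  have hγ : γ.Homotopic ((Path.refl b).trans (γ.trans (Path.refl (g b)))) :=
    ⟨(Path.Homotopy.transRefl γ).symm.trans (Path.Homotopy.reflTrans _).symm⟩
  exact (joined_mk_of_homotopic hγ).trans (h₀ ▸ h₁ ▸ joined_mk_of_continuous_family δ hδ)

theorem joined_mk_of_reidemeisterRel (hg : Continuous g) {u v : Σ b : B, Path b (g b)}
    (h : ReidemeisterRel hg u v) : Joined (mk u.1 u.2) (mk v.1 v.2) := by
  obtain ⟨α, hα⟩ := h
  exact (joined_mk_conj hg α u.2).trans (joined_mk_of_homotopic hα.symm_trans_of_trans).symm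

theorem reidemeisterRel_of_joined (hg : Continuous g) {x y : TwistedLoopSpace g}
    (h : Joined x y) : ReidemeisterRel hg (equivSigma x) (equivSigma y) := by
  obtain ⟨c⟩ := h
  let f : C(I × I, B) := ContinuousMap.uncurry
    ⟨fun t => (c t).1.2, continuous_snd.comp (continuous_subtype_val.comp c.continuous)⟩
  refine ⟨c.map (continuous_fst.comp continuous_subtype_val), ?_⟩
  refine Path.homotopic_trans_of_square f (fun t => (c t).2.1.symm) (fun t => ?_)
    (fun t => ?_) (fun t => (c t).2.2.symm)
  · change y.1.2 t = (c 1).1.2 t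
    rw [c.target]
  · change x.1.2 t = (c 0).1.2 t
    rw [c.source]

theorem joined_iff_reidemeisterRel (hg : Continuous g) (x y : TwistedLoopSpace g) :
    Joined x y ↔ ReidemeisterRel hg (equivSigma x) (equivSigma y) :=
  ⟨reidemeisterRel_of_joined hg, joined_mk_of_reidemeisterRel hg⟩

end TwistedLoopSpace

end

/-- The set of path components of the twisted free loop space `Λ^g B` (pairs `(b, γ)`
with `γ` a path from `b` to `g b`, topologized as a subspace of `B × C([0,1], B)`)
is in natural bijection with the set of Reidemeister classes: pairs `(b, γ : b ⇝ g b)`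
modulo `(b,γ) ∼ (b',γ')` iff there is `α : b ⇝ b'` with `α · γ'` path-homotopic to
`γ · (g ∘ α)` rel endpoints. -/
theorem pi0_twisted_loop_space_equiv_reidemeister {B : Type*} [TopologicalSpace B]
    (g : B → B) (hg : Continuous g) :
    ∃ F : ZerothHomotopy {x : B × C(unitInterval, B) // x.2 0 = x.1 ∧ x.2 1 = g x.1} →
        Quot (fun x y : Σ b : B, Path b (g b) =>
          ∃ α : Path x.1 y.1, (α.trans y.2).Homotopic (x.2.trans (α.map hg))),
      Function.Bijective F ∧
        ∀ x, F (Quotient.mk (pathSetoid _) x) =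
          Quot.mk _ ⟨x.1.1,
            (⟨x.1.2, rfl, rfl⟩ : Path (x.1.2 0) (x.1.2 1)).cast x.2.1.symm x.2.2.symm⟩ :=
  ⟨Quot.congr TwistedLoopSpace.equivSigma (TwistedLoopSpace.joined_iff_reidemeisterRel hg),
    Equiv.bijective _, fun _ => rfl⟩
end
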